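/- arXiv:1608.08690 — 4 statements merged into one kernel-verified Lean document; each statement's English description precedes it below -/
import Mathlib

section
/- Let p be a prime and n an integer with p ∣ n. Then (1/|SL₂(ℤ/pℤ)|) · Σ_{w ∈ SL₂(ℤ/pℤ)} c_p(d(w) − n) = −1/(p + 1), where d(w) denotes the bottom-right entry of w (lifted to ℤ). -/
/-!
For a prime `p`, the Ramanujan sum `c_p(m)` is the sum of the primitive character
`x ↦ e(xm/p)` over `x ≠ 0`, i.e. `p·[p ∣ m] - 1`. As `p ∣ n`, the average over
`SL₂(𝔽_p)` is therefore `p·N₀/|SL₂(𝔽_p)| - 1`, with `N₀` the number of matrices with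
`d = 0`. The fibres of `w ↦ d(w)` are easy to count: over `0` the entries `a` and `c ≠ 0`
are free and `b = -1/c`, over `d ≠ 0` the entries `b, c` are free and `a = (1 + bc)/d`.
Hence `N₀ = p(p-1)`, `|SL₂(𝔽_p)| = p(p-1)(p+1)`, and the average is
`p/(p+1) - 1 = -1/(p+1)`.
-/

/-- The Ramanujan sum `c_q(m) = Σ_{a ∈ (ℤ/qℤ)ˣ} e^{2πi a m / q}`. -/
noncomputable def ramanujanSum (q : ℕ) [NeZero q] (m : ℤ) : ℂ :=
  ∑ a : (ZMod q)ˣ,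
    Complex.exp (2 * Real.pi * Complex.I * (((a : ZMod q).val : ℂ) * (m : ℂ)) / (q : ℂ))

/-- The bottom-right entry of `w ∈ SL₂(ℤ/qℤ)`, lifted to `ℤ`. -/
def dEntry {q : ℕ} (w : Matrix.SpecialLinearGroup (Fin 2) (ZMod q)) : ℤ :=
  ((w : Matrix (Fin 2) (Fin 2) (ZMod q)) 1 1).val

open Finset Matrix
open scoped MatrixGroups

theorem Fintype.sum_units_eq_sum_sub {G₀ M : Type*} [GroupWithZero G₀] [Fintype G₀]
    [DecidableEq G₀] [AddCommGroup M] (f : G₀ → M) :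
    ∑ a : G₀ˣ, f a = ∑ x, f x - f 0 := by
  rw [← sum_erase_eq_sub (mem_univ 0),
    sum_subtype (p := (· ≠ 0)) (univ.erase 0) (by simp) f]
  exact Fintype.sum_equiv unitsEquivNeZero _ _ fun _ ↦ rfl

theorem ramanujanSum_eq_sum_stdAddChar (q : ℕ) [NeZero q] (m : ℤ) :
    ramanujanSum q m = ∑ a : (ZMod q)ˣ, ZMod.stdAddChar ((a : ZMod q) * (m : ZMod q)) := by
  refine sum_congr rfl fun a _ ↦ ?_
  have hlift : (a : ZMod q) * m = (((a : ZMod q).val * m : ℤ) : ZMod q) := by simp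
  rw [hlift, ZMod.stdAddChar_coe]
  push_cast
  ring_nf

theorem ramanujanSum_prime (p : ℕ) [Fact p.Prime] (m : ℤ) :
    ramanujanSum p m = (if (m : ZMod p) = 0 then (p : ℂ) else 0) - 1 := by
  rw [ramanujanSum_eq_sum_stdAddChar,
    Fintype.sum_units_eq_sum_sub (fun x : ZMod p ↦ ZMod.stdAddChar (x * (m : ZMod p))),
    AddChar.sum_mulShift _ (ZMod.isPrimitive_stdAddChar p)]
  simp

namespace Matrix.SpecialLinearGroup

variable {F : Type*} [Field F]

theorem fin_two_det_eq_one (w : SL(2, F)) : w 0 0 * w 1 1 - w 0 1 * w 1 0 = 1 := by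
  rw [← det_fin_two]; exact w.det_coe

def fiberBottomRightEquivOfNeZero {d : F} (hd : d ≠ 0) :
    {w : SL(2, F) // w 1 1 = d} ≃ F × F where
  toFun w := (w.1 0 1, w.1 1 0)
  invFun x := ⟨⟨!![(1 + x.1 * x.2) / d, x.1; x.2, d], by
    rw [det_fin_two_of]; field_simp; ring⟩, rfl⟩
  left_inv := by
    rintro ⟨w, rfl⟩
    have hdet := fin_two_det_eq_one w
    refine Subtype.ext (Subtype.ext ?_)
    conv_rhs => rw [eta_fin_two (w : Matrix (Fin 2) (Fin 2) F)]
    simp only [EmbeddingLike.apply_eq_iff_eq, vecCons_inj, and_true]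
    rw [div_eq_iff hd]
    linear_combination -hdet
  right_inv _ := rfl

def fiberBottomRightEquivZero :
    {w : SL(2, F) // w 1 1 = 0} ≃ F × Fˣ where
  toFun w := (w.1 0 0, Units.mk0 (w.1 1 0) fun h ↦ by
    simpa [w.2, h] using fin_two_det_eq_one w.1)
  invFun x := ⟨⟨!![x.1, -x.2⁻¹; x.2, 0], by simp [det_fin_two_of]⟩, rfl⟩
  left_inv := by
    rintro ⟨w, hw⟩
    have hdet := fin_two_det_eq_one w
    rw [hw] at hdet
    have h10 : w 1 0 ≠ 0 := fun h ↦ by simp [h] at hdet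
    refine Subtype.ext (Subtype.ext ?_)
    conv_rhs => rw [eta_fin_two (w : Matrix (Fin 2) (Fin 2) F), hw]
    simp only [EmbeddingLike.apply_eq_iff_eq, vecCons_inj, Units.val_inv_eq_inv_val,
      Units.val_mk0, and_true, true_and]
    field_simp
    linear_combination hdet
  right_inv _ := by ext <;> simp

variable [Fintype F] [DecidableEq F]

theorem card_fiber_bottomRight_zero :
    Fintype.card {w : SL(2, F) // w 1 1 = 0} = Fintype.card F * (Fintype.card F - 1) := by
  rw [Fintype.card_congr fiberBottomRightEquivZero, Fintype.card_prod, Fintype.card_units]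

theorem card_fiber_bottomRight_of_ne_zero {d : F} (hd : d ≠ 0) :
    Fintype.card {w : SL(2, F) // w 1 1 = d} = Fintype.card F * Fintype.card F := by
  rw [Fintype.card_congr (fiberBottomRightEquivOfNeZero hd), Fintype.card_prod]

theorem card_fin_two_field :
    Fintype.card SL(2, F) = Fintype.card F * (Fintype.card F - 1) * (Fintype.card F + 1) := by
  rw [Fintype.card_congr (Equiv.sigmaFiberEquiv fun w : SL(2, F) ↦ w 1 1).symm,
    Fintype.card_sigma, Fintype.sum_eq_add_sum_compl 0, card_fiber_bottomRight_zero,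
    sum_congr rfl fun d hd ↦ card_fiber_bottomRight_of_ne_zero (by simpa using hd), sum_const,
    card_compl, card_singleton, smul_eq_mul]
  ring

end Matrix.SpecialLinearGroup

theorem stmt0 (p : ℕ) [Fact p.Prime] (n : ℤ) (hn : (p : ℤ) ∣ n) :
    (1 / (Fintype.card (Matrix.SpecialLinearGroup (Fin 2) (ZMod p)) : ℂ)) *
      ∑ w : Matrix.SpecialLinearGroup (Fin 2) (ZMod p), ramanujanSum p (dEntry w - n)
    = -1 / ((p : ℂ) + 1) := by
  have hentry (w : SL(2, ZMod p)) : ((dEntry w - n : ℤ) : ZMod p) = w 1 1 := by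
    simp [dEntry, (ZMod.intCast_zmod_eq_zero_iff_dvd n p).2 hn]
  simp_rw [ramanujanSum_prime, hentry]
  rw [sum_sub_distrib, ← sum_filter, sum_const, sum_const, card_univ, ← Fintype.card_subtype,
    SpecialLinearGroup.card_fiber_bottomRight_zero, SpecialLinearGroup.card_fin_two_field,
    ZMod.card]
  have hp : p.Prime := Fact.out
  have hp0 : (p : ℂ) ≠ 0 := by exact_mod_cast hp.ne_zero
  have hp1 : (p : ℂ) - 1 ≠ 0 := sub_ne_zero.2 (by exact_mod_cast hp.one_lt.ne')
  have hp2 : (p : ℂ) + 1 ≠ 0 := by exact_mod_cast p.succ_ne_zero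
  push_cast [hp.one_le, nsmul_eq_mul]
  field_simp
  ring
end

section
/- Let p be a prime, t ≥ 2 an integer, γ ∈ SL₂(ℤ/p^{t−1}ℤ), and let d₀ ∈ ℤ/p^tℤ be any element whose reduction modulo p^{t−1} equals the bottom-right entry of γ. Then the number of elements w ∈ SL₂(ℤ/p^tℤ) such that w reduces to γ modulo p^{t−1} and the bottom-right entry of w equals d₀ is exactly p². -/
/-!
Let `f : R → S` be surjective with square-zero kernel `I`, and fix lifts `a, b, c` of the
entries `γ 0 0, γ 0 1, γ 1 0`. Every lift of `γ` with corner `d` is `!![a + x, b + y; c + z, d]`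
with `x, y, z ∈ I`, and since `y z = 0` its determinant is `(a d - b c) + (d x - c y - b z)`.
So the lifts correspond to a fibre of the additive map `I³ → I, (x, y, z) ↦ d x - c y - b z`,
which is onto because `(a u, b u, 0) ↦ (a d - b c) u = u`. All its fibres therefore have
`|I|³ / |I| = |I|²` elements. For `ℤ/p^t → ℤ/p^(t-1)` the kernel `p^(t-1) ℤ/p^t` has
order `p`, and it has square zero as soon as `t ≥ 2`.
-/

namespace AddMonoidHom

variable {G H : Type*} [AddGroup G] [AddGroup H]

theorem card_ker_mul_card_of_surjective (f : G →+ H) (hf : Function.Surjective f) :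
    Nat.card f.ker * Nat.card H = Nat.card G := by
  rw [← f.ker.card_mul_index, AddSubgroup.index_ker, f.range_eq_top_of_surjective hf,
    AddSubgroup.card_top]

theorem card_fiber_mul_card_of_surjective (f : G →+ H) (hf : Function.Surjective f) (h : H) :
    Nat.card {g // f g = h} * Nat.card H = Nat.card G := by
  rw [← f.card_ker_mul_card_of_surjective hf,
    ← Nat.card_congr (f.fiberEquivKerOfSurjective hf h)]
  rfl

end AddMonoidHom

theorem RingHom.card_ker_mul_card_of_surjective {R S : Type*} [Ring R] [Ring S] (f : R →+* S)
    (hf : Function.Surjective f) : Nat.card (RingHom.ker f) * Nat.card S = Nat.card R :=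
  f.toAddMonoidHom.card_ker_mul_card_of_surjective hf

open Matrix

variable {R S : Type*} [CommRing R] [CommRing S]

def Ideal.detIncrement (I : Ideal R) (b c d : R) : I × I × I →+ I :=
  AddMonoidHom.mk' (fun v => d • v.1 - c • v.2.1 - b • v.2.2) fun v w => by
    simp only [Prod.fst_add, Prod.snd_add, smul_add]
    abel

theorem Ideal.coe_detIncrement (I : Ideal R) (b c d : R) (v : I × I × I) :
    (I.detIncrement b c d v : R) = d * v.1 - c * v.2.1 - b * v.2.2 :=
  rfl

theorem Ideal.mul_eq_zero_of_sq_eq_bot {I : Ideal R} (hI : I ^ 2 = ⊥) {x y : R} (hx : x ∈ I)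
    (hy : y ∈ I) : x * y = 0 := by
  rw [← Ideal.mem_bot, ← hI, sq]
  exact Ideal.mul_mem_mul hx hy

theorem Ideal.detIncrement_surjective {I : Ideal R} (hI : I ^ 2 = ⊥) {a b c d : R}
    (hdet : a * d - b * c - 1 ∈ I) : Function.Surjective (I.detIncrement b c d) := by
  intro u
  refine ⟨(⟨a * u, I.mul_mem_left a u.2⟩, ⟨b * u, I.mul_mem_left b u.2⟩, 0),
    Subtype.ext ?_⟩
  rw [I.coe_detIncrement, Submodule.coe_zero]
  linear_combination I.mul_eq_zero_of_sq_eq_bot hI hdet u.2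

theorem Matrix.SpecialLinearGroup.map_eq_iff {n : Type*} [Fintype n] [DecidableEq n]
    {f : R →+* S} {w : SpecialLinearGroup n R} {γ : SpecialLinearGroup n S} :
    map f w = γ ↔ ∀ i j, f (w i j) = γ i j := by
  rw [SpecialLinearGroup.ext_iff]
  rfl

theorem Matrix.SpecialLinearGroup.card_lifts_eq_card_detIncrement_fiber {f : R →+* S}
    (hI : RingHom.ker f ^ 2 = ⊥) {γ : SpecialLinearGroup (Fin 2) S} {a b c d : R}
    (ha : f a = γ 0 0) (hb : f b = γ 0 1) (hc : f c = γ 1 0) (hd : f d = γ 1 1) :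
    Nat.card {w : SpecialLinearGroup (Fin 2) R //
        map f w = γ ∧ (w : Matrix (Fin 2) (Fin 2) R) 1 1 = d} =
      Nat.card {v // ((RingHom.ker f).detIncrement b c d v : R) = 1 - (a * d - b * c)} := by
  have sub_mem {r s : R} (h : f r = f s) : r - s ∈ RingHom.ker f := by
    rw [RingHom.mem_ker, map_sub, h, sub_self]
  refine Nat.card_congr
    { toFun := fun w =>
        have hw := map_eq_iff.mp w.2.1
        ⟨(⟨w.1 0 0 - a, sub_mem ((hw 0 0).trans ha.symm)⟩,
          ⟨w.1 0 1 - b, sub_mem ((hw 0 1).trans hb.symm)⟩,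
          ⟨w.1 1 0 - c, sub_mem ((hw 1 0).trans hc.symm)⟩), by
          have hdet := w.1.2
          rw [det_fin_two, w.2.2] at hdet
          have hyz := Ideal.mul_eq_zero_of_sq_eq_bot hI
            (sub_mem ((hw 0 1).trans hb.symm)) (sub_mem ((hw 1 0).trans hc.symm))
          rw [Ideal.coe_detIncrement]
          linear_combination hdet + hyz⟩
      invFun := fun v =>
        ⟨⟨!![a + v.1.1, b + v.1.2.1; c + v.1.2.2, d], by
          have hv := v.2
          rw [Ideal.coe_detIncrement] at hv
          rw [det_fin_two_of]
          linear_combination hv - Ideal.mul_eq_zero_of_sq_eq_bot hI v.1.2.1.2 v.1.2.2.2⟩, by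
          have h0 (x : RingHom.ker f) : f x = 0 := x.2
          refine map_eq_iff.mpr fun i j => ?_
          fin_cases i <;> fin_cases j <;> simp [ha, hb, hc, hd, h0], rfl⟩
      left_inv := fun w => by
        ext i j
        fin_cases i <;> fin_cases j <;> simp [← w.2.2]
      right_inv := fun v => by
        ext <;> simp }

theorem Matrix.SpecialLinearGroup.card_lifts_with_corner [Finite R] {f : R →+* S}
    (hf : Function.Surjective f) (hI : RingHom.ker f ^ 2 = ⊥) (γ : SpecialLinearGroup (Fin 2) S)
    (d : R) (hd : f d = γ 1 1) :
    Nat.card {w : SpecialLinearGroup (Fin 2) R //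
        map f w = γ ∧ (w : Matrix (Fin 2) (Fin 2) R) 1 1 = d} =
      Nat.card (RingHom.ker f) ^ 2 := by
  obtain ⟨a, ha⟩ := hf (γ 0 0)
  obtain ⟨b, hb⟩ := hf (γ 0 1)
  obtain ⟨c, hc⟩ := hf (γ 1 0)
  set I := RingHom.ker f
  have hdet : a * d - b * c - 1 ∈ I := by
    rw [RingHom.mem_ker, map_sub, map_sub, map_mul, map_mul, map_one, ha, hb, hc, hd,
      ← det_fin_two, γ.2, sub_self]
  have hfiber := AddMonoidHom.card_fiber_mul_card_of_surjective _
    (Ideal.detIncrement_surjective hI hdet) ⟨1 - (a * d - b * c), by simpa using I.neg_mem hdet⟩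
  rw [card_lifts_eq_card_detIncrement_fiber hI ha hb hc hd]
  simp only [Subtype.ext_iff, Nat.card_prod] at hfiber
  rw [sq]
  exact Nat.eq_of_mul_eq_mul_right Nat.card_pos (hfiber.trans (Nat.mul_comm _ _))

theorem ZMod.ker_castHom_sq_eq_bot {m n : ℕ} [NeZero m] (h : n ∣ m) (hm : m ∣ n ^ 2) :
    RingHom.ker (ZMod.castHom h (ZMod n)) ^ 2 = ⊥ := by
  rw [eq_bot_iff, sq, Submodule.mul_le]
  intro x hx y hy
  obtain ⟨k, rfl⟩ := ZMod.natCast_zmod_surjective x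
  obtain ⟨l, rfl⟩ := ZMod.natCast_zmod_surjective y
  rw [RingHom.mem_ker, map_natCast, ZMod.natCast_eq_zero_iff] at hx hy
  rw [Ideal.mem_bot, ← Nat.cast_mul, ZMod.natCast_eq_zero_iff]
  exact hm.trans (sq n ▸ mul_dvd_mul hx hy)

theorem ZMod.card_ker_castHom {m n : ℕ} [NeZero m] (h : n ∣ m) :
    Nat.card (RingHom.ker (ZMod.castHom h (ZMod n))) = m / n := by
  have hn : n ≠ 0 := fun hn => NeZero.ne m (Nat.eq_zero_of_zero_dvd (hn ▸ h))
  have := (ZMod.castHom h (ZMod n)).card_ker_mul_card_of_surjective (ZMod.castHom_surjective h)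
  rw [Nat.card_zmod, Nat.card_zmod] at this
  exact (Nat.div_eq_of_eq_mul_left (Nat.pos_of_ne_zero hn) this.symm).symm

theorem stmt6 (p : ℕ) [Fact p.Prime] (t : ℕ) (ht : 2 ≤ t)
    (γ : Matrix.SpecialLinearGroup (Fin 2) (ZMod (p ^ (t - 1))))
    (d₀ : ZMod (p ^ t))
    (hd₀ : ZMod.castHom (pow_dvd_pow p (Nat.sub_le t 1)) (ZMod (p ^ (t - 1))) d₀
        = (γ : Matrix (Fin 2) (Fin 2) (ZMod (p ^ (t - 1)))) 1 1) :
    Nat.card {w : Matrix.SpecialLinearGroup (Fin 2) (ZMod (p ^ t)) //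
        Matrix.SpecialLinearGroup.map
            (ZMod.castHom (pow_dvd_pow p (Nat.sub_le t 1)) (ZMod (p ^ (t - 1)))) w = γ ∧
        (w : Matrix (Fin 2) (Fin 2) (ZMod (p ^ t))) 1 1 = d₀} = p ^ 2 := by
  have hdvd : p ^ (t - 1) ∣ p ^ t := pow_dvd_pow p (Nat.sub_le t 1)
  have hsq : p ^ t ∣ (p ^ (t - 1)) ^ 2 := by
    rw [← pow_mul]
    exact pow_dvd_pow p (by omega)
  rw [SpecialLinearGroup.card_lifts_with_corner (ZMod.castHom_surjective hdvd)
    (ZMod.ker_castHom_sq_eq_bot hdvd hsq) γ d₀ hd₀, ZMod.card_ker_castHom hdvd,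
    Nat.pow_div (Nat.sub_le t 1) (Fact.out : p.Prime).pos, Nat.sub_sub_self (by omega), pow_one]
end

section
/- Define 𝔊(n) = (π²/6) · φ(n)/n for positive integers n, where φ is Euler's totient function. Then for every real number s > 0, lim_{N→∞} (s/N^s) · Σ_{n=1}^{N} n^{s−1} · 𝔊(n) = 1; that is, Σ_{n=1}^{N} n^{s−1}𝔊(n) is asymptotic to N^s/s as N → ∞. -/
open Filter Real Finset ArithmeticFunction Topology
open scoped ArithmeticFunction.Moebius

/-!
Write φ = μ ∗ id. Exchanging the order of summation,
`(s / N^s) ∑_{n ≤ N} n^(s-1) φ(n)/n = ∑_{d ≤ N} μ(d)/d² · P_s(N/d)` with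
`P_s(x) = s x^(-s) ∑_{m ≤ x} m^(s-1)` (`normalizedPowerSum`).
The tangent-line bounds for the convex (s ≥ 1) or concave (s ≤ 1) function `x ↦ x^s` compare
`s m^(s-1)` with `(m+1)^s - m^s` and `m^s - (m-1)^s`; telescoping gives
`M^s - 1 ≤ s ∑_{m ≤ M} m^(s-1) ≤ (M+1)^s`, hence `P_s(x) → 1` and `0 ≤ P_s ≤ 2^s`.
By dominated convergence the sum over `d` tends to `∑ μ(d)/d² = 1/ζ(2) = 6/π²`.
-/

lemma add_mul_sub_le_rpow_of_one_le {s k y : ℝ} (hs : 1 ≤ s) (hk : 0 < k) (hy : 0 ≤ y) :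
    k ^ s + s * k ^ (s - 1) * (y - k) ≤ y ^ s := by
  have h := one_add_mul_self_le_rpow_one_add (s := y / k - 1)
    (by have := div_nonneg hy hk.le; linarith) hs
  rw [add_sub_cancel, div_rpow hy hk.le, le_div_iff₀ (rpow_pos_of_pos hk s)] at h
  rw [rpow_sub_one hk.ne']
  calc _ = (1 + s * (y / k - 1)) * k ^ s := by field_simp
    _ ≤ _ := h

lemma rpow_le_add_mul_sub_of_le_one {s k y : ℝ} (hs₀ : 0 ≤ s) (hs₁ : s ≤ 1) (hk : 0 < k)
    (hy : 0 ≤ y) : y ^ s ≤ k ^ s + s * k ^ (s - 1) * (y - k) := by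
  have h := rpow_one_add_le_one_add_mul_self (s := y / k - 1)
    (by have := div_nonneg hy hk.le; linarith) hs₀ hs₁
  rw [add_sub_cancel, div_rpow hy hk.le, div_le_iff₀ (rpow_pos_of_pos hk s)] at h
  rw [rpow_sub_one hk.ne']
  calc _ ≤ (1 + s * (y / k - 1)) * k ^ s := h
    _ = _ := by field_simp

lemma sum_Icc_one_sub_sub_one (f : ℝ → ℝ) (M : ℕ) :
    ∑ m ∈ Icc 1 M, (f m - f (m - 1)) = f M - f 0 := by
  induction M with
  | zero => simp
  | succ M ih =>
    rw [sum_Icc_succ_top (by omega), ih]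
    push_cast
    rw [add_sub_cancel_right]
    ring

lemma mul_sum_rpow_sub_one_mem_Icc {s : ℝ} (hs : 0 < s) (M : ℕ) :
    s * ∑ m ∈ Icc 1 M, (m : ℝ) ^ (s - 1) ∈ Set.Icc ((M : ℝ) ^ s - 1) (((M : ℝ) + 1) ^ s) := by
  have hfwd := sum_Icc_one_sub_sub_one (fun x => (x + 1) ^ s) M
  have hbwd := sum_Icc_one_sub_sub_one (fun x => x ^ s) M
  simp only [sub_add_cancel, zero_add, one_rpow, zero_rpow hs.ne', sub_zero] at hfwd hbwd
  have hmono : (M : ℝ) ^ s ≤ ((M : ℝ) + 1) ^ s := by gcongr; linarith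
  rw [mul_sum]
  have hm1 {m : ℕ} (hm : m ∈ Icc 1 M) : (1 : ℝ) ≤ m := by exact_mod_cast (mem_Icc.1 hm).1
  rcases le_total 1 s with h1 | h1
  · have hlow : ∑ m ∈ Icc 1 M, ((m : ℝ) ^ s - ((m : ℝ) - 1) ^ s)
        ≤ ∑ m ∈ Icc 1 M, s * (m : ℝ) ^ (s - 1) := sum_le_sum fun m hm => by
      linarith [add_mul_sub_le_rpow_of_one_le (k := m) (y := m - 1) h1 (by linarith [hm1 hm])
        (by linarith [hm1 hm])]
    have hup : ∑ m ∈ Icc 1 M, s * (m : ℝ) ^ (s - 1)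
        ≤ ∑ m ∈ Icc 1 M, (((m : ℝ) + 1) ^ s - (m : ℝ) ^ s) := sum_le_sum fun m hm => by
      linarith [add_mul_sub_le_rpow_of_one_le (k := m) (y := m + 1) h1 (by linarith [hm1 hm])
        (by linarith [hm1 hm])]
    constructor <;> linarith
  · have hlow : ∑ m ∈ Icc 1 M, (((m : ℝ) + 1) ^ s - (m : ℝ) ^ s)
        ≤ ∑ m ∈ Icc 1 M, s * (m : ℝ) ^ (s - 1) := sum_le_sum fun m hm => by
      linarith [rpow_le_add_mul_sub_of_le_one (k := m) (y := m + 1) hs.le h1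
        (by linarith [hm1 hm]) (by linarith [hm1 hm])]
    have hup : ∑ m ∈ Icc 1 M, s * (m : ℝ) ^ (s - 1)
        ≤ ∑ m ∈ Icc 1 M, ((m : ℝ) ^ s - ((m : ℝ) - 1) ^ s) := sum_le_sum fun m hm => by
      linarith [rpow_le_add_mul_sub_of_le_one (k := m) (y := m - 1) hs.le h1
        (by linarith [hm1 hm]) (by linarith [hm1 hm])]
    constructor <;> linarith

noncomputable def normalizedPowerSum (s x : ℝ) : ℝ :=
  s * (∑ m ∈ Icc 1 ⌊x⌋₊, (m : ℝ) ^ (s - 1)) / x ^ s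

lemma normalizedPowerSum_of_lt_one {s x : ℝ} (hx : x < 1) : normalizedPowerSum s x = 0 := by
  simp [normalizedPowerSum, Nat.floor_eq_zero.2 hx]

lemma normalizedPowerSum_nonneg {s x : ℝ} (hs : 0 ≤ s) (hx : 0 ≤ x) :
    0 ≤ normalizedPowerSum s x := by
  unfold normalizedPowerSum
  have := sum_nonneg fun m (_ : m ∈ Icc 1 ⌊x⌋₊) => rpow_nonneg (Nat.cast_nonneg m) (s - 1)
  positivity

lemma normalizedPowerSum_le {s x : ℝ} (hs : 0 < s) (hx : 0 < x) :
    normalizedPowerSum s x ≤ (1 + x⁻¹) ^ s := by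
  have hfloor : (⌊x⌋₊ : ℝ) + 1 ≤ x + 1 := by linarith [Nat.floor_le hx.le]
  rw [normalizedPowerSum, div_le_iff₀ (by positivity), ← mul_rpow (by positivity) hx.le,
    add_mul, one_mul, inv_mul_cancel₀ hx.ne']
  exact (mul_sum_rpow_sub_one_mem_Icc hs _).2.trans (by gcongr)

lemma le_normalizedPowerSum {s x : ℝ} (hs : 0 < s) (hx : 1 ≤ x) :
    (1 - x⁻¹) ^ s - x⁻¹ ^ s ≤ normalizedPowerSum s x := by
  have hx₀ : 0 < x := by linarith
  have hfloor : x - 1 ≤ ⌊x⌋₊ := (Nat.sub_one_lt_floor x).le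
  have hx' : 0 ≤ 1 - x⁻¹ := sub_nonneg.2 (inv_le_one_of_one_le₀ hx)
  rw [normalizedPowerSum, le_div_iff₀ (by positivity), sub_mul, ← mul_rpow hx' hx₀.le,
    ← mul_rpow (by positivity) hx₀.le, sub_mul, one_mul, inv_mul_cancel₀ hx₀.ne', one_rpow]
  refine le_trans ?_ (mul_sum_rpow_sub_one_mem_Icc hs _).1
  gcongr

lemma tendsto_normalizedPowerSum {s : ℝ} (hs : 0 < s) :
    Tendsto (normalizedPowerSum s) atTop (𝓝 1) := by
  have hlow : Tendsto (fun t : ℝ => (1 - t) ^ s - t ^ s) (𝓝 0) (𝓝 1) := by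
    have : ContinuousAt (fun t : ℝ => (1 - t) ^ s - t ^ s) 0 := by fun_prop (disch := simp [hs.le])
    simpa [zero_rpow hs.ne'] using this.tendsto
  have hup : Tendsto (fun t : ℝ => (1 + t) ^ s) (𝓝 0) (𝓝 1) := by
    have : ContinuousAt (fun t : ℝ => (1 + t) ^ s) 0 := by fun_prop (disch := simp)
    simpa using this.tendsto
  refine tendsto_of_tendsto_of_tendsto_of_le_of_le' (hlow.comp tendsto_inv_atTop_zero)
    (hup.comp tendsto_inv_atTop_zero) ?_ ?_
  · filter_upwards [eventually_ge_atTop 1] with x hx using le_normalizedPowerSum hs hx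
  · filter_upwards [eventually_gt_atTop 0] with x hx using normalizedPowerSum_le hs hx

lemma norm_normalizedPowerSum_le {s x : ℝ} (hs : 0 < s) (hx : 0 ≤ x) :
    ‖normalizedPowerSum s x‖ ≤ 2 ^ s := by
  rcases lt_or_ge x 1 with hx1 | hx1
  · rw [normalizedPowerSum_of_lt_one hx1, norm_zero]
    positivity
  rw [norm_of_nonneg (normalizedPowerSum_nonneg hs.le hx)]
  refine (normalizedPowerSum_le hs (by linarith)).trans ?_
  gcongr
  linarith [inv_le_one_of_one_le₀ hx1]

lemma sum_Icc_sum_divisorsAntidiagonal {R : Type*} [CommSemiring R] (f g : ℕ → R) (N : ℕ) :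
    ∑ n ∈ Icc 1 N, ∑ x ∈ n.divisorsAntidiagonal, f x.1 * g x.2 =
      ∑ d ∈ Icc 1 N, f d * ∑ m ∈ Icc 1 (N / d), g m := by
  let F : ArithmeticFunction R := ⟨fun n => if n = 0 then 0 else f n, if_pos rfl⟩
  let G : ArithmeticFunction R := ⟨fun n => if n = 0 then 0 else g n, if_pos rfl⟩
  have hF {n : ℕ} (hn : n ≠ 0) : F n = f n := if_neg hn
  have hG {n : ℕ} (hn : n ≠ 0) : G n = g n := if_neg hn
  have hpos {a b : ℕ} (h : a ∈ Icc 1 b) : a ≠ 0 := by grind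
  convert sum_Ioc_mul_eq_sum_sum F G N using 1 <;>
    simp only [← Icc_add_one_left_eq_Ioc, zero_add, mul_apply]
  · refine sum_congr rfl fun n _ => sum_congr rfl fun x hx => ?_
    obtain ⟨hx₁, hx₂⟩ := Nat.ne_zero_of_mem_divisorsAntidiagonal hx
    rw [hF hx₁, hG hx₂]
  · refine sum_congr rfl fun d hd => ?_
    rw [hF (hpos hd), sum_congr rfl fun m hm => hG (hpos hm)]

lemma totient_eq_sum_moebius_mul {R : Type*} [NonAssocRing R] (n : ℕ) :
    (n.totient : R) = ∑ x ∈ n.divisorsAntidiagonal, (μ x.1 : R) * x.2 := by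
  rcases n.eq_zero_or_pos with rfl | hn
  · simp
  refine ((sum_eq_iff_sum_mul_moebius_eq (f := fun n => (n.totient : R))
    (g := fun n => (n : R))).1 (fun n _ => ?_) n hn).symm
  rw [← Nat.cast_sum, Nat.sum_totient]

lemma rpow_sub_one_mul_totient_div (s : ℝ) (n : ℕ) :
    (n : ℝ) ^ (s - 1) * (n.totient / n) =
      ∑ x ∈ n.divisorsAntidiagonal, (μ x.1 : ℝ) * (x.1 : ℝ) ^ (s - 2) * (x.2 : ℝ) ^ (s - 1) := by
  rw [totient_eq_sum_moebius_mul, sum_div, mul_sum]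
  refine sum_congr rfl fun x hx => ?_
  obtain ⟨rfl, hn⟩ := Nat.mem_divisorsAntidiagonal.1 hx
  have h₁ : (x.1 : ℝ) ≠ 0 := by exact_mod_cast left_ne_zero_of_mul hn
  have h₂ : (x.2 : ℝ) ≠ 0 := by exact_mod_cast right_ne_zero_of_mul hn
  push_cast
  simp only [mul_rpow (Nat.cast_nonneg _) (Nat.cast_nonneg _), show s - 2 = s - 1 - 1 by ring,
    rpow_sub_one h₁, rpow_sub_one h₂]
  field_simp

lemma mul_sum_rpow_sub_one_mul_totient_div (s : ℝ) (N : ℕ) :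
    s / (N : ℝ) ^ s * ∑ n ∈ Icc 1 N, (n : ℝ) ^ (s - 1) * (n.totient / n) =
      ∑ d ∈ Icc 1 N, (μ d : ℝ) / (d : ℝ) ^ 2 * normalizedPowerSum s ((N : ℝ) / d) := by
  simp only [rpow_sub_one_mul_totient_div]
  rw [sum_Icc_sum_divisorsAntidiagonal (fun d => (μ d : ℝ) * (d : ℝ) ^ (s - 2))
    (fun m => (m : ℝ) ^ (s - 1)), mul_sum]
  refine sum_congr rfl fun d hd => ?_
  have hd₀ : (0 : ℝ) < d := by exact_mod_cast (mem_Icc.1 hd).1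
  rw [normalizedPowerSum, Nat.floor_div_eq_div, div_rpow (Nat.cast_nonneg _) hd₀.le,
    show s - 2 = s - 1 - 1 by ring]
  simp only [rpow_sub_one hd₀.ne']
  field_simp

lemma tsum_moebius_div_sq : ∑' d : ℕ, (μ d : ℝ) / (d : ℝ) ^ 2 = 6 / π ^ 2 := by
  have h2 : 1 < (2 : ℂ).re := by norm_num
  have hL : LSeries (fun n => (μ n : ℂ)) 2 = ((∑' d : ℕ, (μ d : ℝ) / (d : ℝ) ^ 2 : ℝ) : ℂ) := by
    rw [Complex.ofReal_tsum]
    refine tsum_congr fun n => ?_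
    rcases eq_or_ne n 0 with rfl | hn
    · simp
    · simp [LSeries.term_of_ne_zero hn]
  have h := LSeries_zeta_mul_Lseries_moebius h2
  rw [LSeries_zeta_eq_riemannZeta h2, riemannZeta_two, hL] at h
  have hπ : π ^ 2 ≠ 0 := by positivity
  rw [eq_div_iff hπ]
  have : π ^ 2 / 6 * ∑' d : ℕ, (μ d : ℝ) / (d : ℝ) ^ 2 = 1 := by exact_mod_cast h
  linear_combination 6 * this

lemma tendsto_moebius_div_sq_mul_normalizedPowerSum {s : ℝ} (hs : 0 < s) (d : ℕ) :
    Tendsto (fun N : ℕ => (μ d : ℝ) / (d : ℝ) ^ 2 * normalizedPowerSum s ((N : ℝ) / d)) atTop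
      (𝓝 ((μ d : ℝ) / (d : ℝ) ^ 2)) := by
  rcases eq_or_ne d 0 with rfl | hd
  · simp
  simpa using ((tendsto_normalizedPowerSum hs).comp
    (tendsto_natCast_atTop_atTop.atTop_div_const (by positivity))).const_mul ((μ d : ℝ) / d ^ 2)

lemma norm_moebius_div_sq_mul_normalizedPowerSum_le {s : ℝ} (hs : 0 < s) (N d : ℕ) :
    ‖(μ d : ℝ) / (d : ℝ) ^ 2 * normalizedPowerSum s ((N : ℝ) / d)‖ ≤ 2 ^ s / (d : ℝ) ^ 2 := by
  rw [norm_mul, norm_div, norm_pow, Real.norm_natCast, div_mul_eq_mul_div, mul_comm]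
  gcongr
  calc ‖normalizedPowerSum s ((N : ℝ) / d)‖ * ‖(μ d : ℝ)‖
      ≤ 2 ^ s * 1 := by
        gcongr
        · exact norm_normalizedPowerSum_le hs (by positivity)
        · rw [Real.norm_eq_abs]
          exact_mod_cast abs_moebius_le_one
    _ = 2 ^ s := mul_one _

lemma moebius_div_sq_mul_normalizedPowerSum_eq_zero {s : ℝ} {N d : ℕ} (hd : d ∉ Icc 1 N) :
    (μ d : ℝ) / (d : ℝ) ^ 2 * normalizedPowerSum s ((N : ℝ) / d) = 0 := by
  rcases eq_or_ne d 0 with rfl | hd₀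
  · simp
  have hlt : (N : ℝ) / d < 1 := by
    rw [div_lt_one (by positivity)]
    exact_mod_cast (by grind : N < d)
  rw [normalizedPowerSum_of_lt_one hlt, mul_zero]

theorem stmt11 (s : ℝ) (hs : 0 < s) :
    Tendsto (fun N : ℕ =>
        (s / (N : ℝ) ^ s) * ∑ n ∈ Finset.Icc 1 N,
          (n : ℝ) ^ (s - 1) * ((Real.pi ^ 2 / 6) * (Nat.totient n : ℝ) / (n : ℝ)))
      atTop (nhds 1) := by
  have hrearrange (N : ℕ) : (s / (N : ℝ) ^ s) * ∑ n ∈ Finset.Icc 1 N,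
      (n : ℝ) ^ (s - 1) * ((π ^ 2 / 6) * (n.totient : ℝ) / (n : ℝ)) =
      π ^ 2 / 6 * ∑' d : ℕ, (μ d : ℝ) / (d : ℝ) ^ 2 * normalizedPowerSum s ((N : ℝ) / d) := by
    rw [tsum_eq_sum fun d => moebius_div_sq_mul_normalizedPowerSum_eq_zero,
      ← mul_sum_rpow_sub_one_mul_totient_div, mul_sum, mul_sum, mul_sum]
    exact sum_congr rfl fun n _ => by ring
  have hsum : Summable fun d : ℕ => 2 ^ s / (d : ℝ) ^ 2 := by
    simpa [div_eq_mul_inv] using (summable_one_div_nat_pow.2 one_lt_two).mul_left (2 ^ s)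
  have hlim := tendsto_tsum_of_dominated_convergence hsum
    (tendsto_moebius_div_sq_mul_normalizedPowerSum hs)
    (.of_forall (norm_moebius_div_sq_mul_normalizedPowerSum_le hs))
  rw [tsum_moebius_div_sq] at hlim
  have hπ : π ^ 2 / 6 * (6 / π ^ 2) = 1 := by field_simp
  have h := hlim.const_mul (π ^ 2 / 6)
  rw [hπ] at h
  exact h.congr fun N => (hrearrange N).symm
end

section
/- Fix an integer A ≥ 2 and for 1 ≤ a ≤ A let M(a) be the 2×2 integer matrix with rows (0, 1) and (1, a). Then for every positive integer q, the reduction-mod-q map SL₂(ℤ) → SL₂(ℤ/qℤ), restricted to the subgroup of SL₂(ℤ) generated by {M(i)·M(j) : 1 ≤ i, j ≤ A}, is surjective onto SL₂(ℤ/qℤ). -/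
/-!
Writing `M(i)M(j) = [[1, j], [i, 1 + ij]]`, multiplying by the shears `L(t) = [[1, 0], [t, 1]]`
on the left or `U(t) = [[1, t], [0, 1]]` on the right shifts `i` or `j` by `t`. Hence
`L(1) = M(2)M(1) (M(1)M(1))⁻¹` and `U(1) = (M(1)M(1))⁻¹ M(1)M(2)` lie in the group, and it
remains to see that `U(1)` and `L(1)` generate `SL₂(ℤ/qℤ)`. Every `U(t)`, `L(t)` is a power of
them, and a Euclidean algorithm on the lower-left entry (represented in `[0, q)`) reduces any
matrix to an upper-triangular one `[[a, b], [0, a⁻¹]]`, which factors into shears and the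
rotation `[[0, -1], [1, 0]] = U(-1) L(1) U(-1)`.
-/

/-- The matrix `M(a) = [[0, 1], [1, a]]` over `ℤ`. -/
def M (a : ℕ) : Matrix (Fin 2) (Fin 2) ℤ := !![0, 1; 1, (a : ℤ)]

open Matrix

lemma ZMod.val_sub_natCast_div_mul {q : ℕ} [NeZero q] (a c : ZMod q) :
    (a - ((a.val / c.val : ℕ) : ZMod q) * c).val = a.val % c.val := by
  have hdiv : a = ((a.val / c.val : ℕ) : ZMod q) * c + ((a.val % c.val : ℕ) : ZMod q) := by
    conv_lhs => rw [← ZMod.natCast_zmod_val a, ← Nat.div_add_mod' a.val c.val]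
    push_cast
    rw [ZMod.natCast_zmod_val]
  rw [show a - ((a.val / c.val : ℕ) : ZMod q) * c = ((a.val % c.val : ℕ) : ZMod q) by
    linear_combination hdiv]
  exact ZMod.val_natCast_of_lt ((Nat.mod_le _ _).trans_lt (ZMod.val_lt a))

namespace Matrix.SpecialLinearGroup

section shears

variable {R : Type*} [CommRing R]

def upper (t : R) : SpecialLinearGroup (Fin 2) R := ⟨!![1, t; 0, 1], by simp [det_fin_two_of]⟩

def lower (t : R) : SpecialLinearGroup (Fin 2) R := ⟨!![1, 0; t, 1], by simp [det_fin_two_of]⟩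

def rot : SpecialLinearGroup (Fin 2) R := ⟨!![0, -1; 1, 0], by simp [det_fin_two_of]⟩

@[simp] lemma coe_upper (t : R) : (upper t : Matrix (Fin 2) (Fin 2) R) = !![1, t; 0, 1] := rfl

@[simp] lemma coe_lower (t : R) : (lower t : Matrix (Fin 2) (Fin 2) R) = !![1, 0; t, 1] := rfl

@[simp] lemma coe_rot : ((rot : SpecialLinearGroup (Fin 2) R) : Matrix (Fin 2) (Fin 2) R) =
    !![0, -1; 1, 0] := rfl

lemma upper_add (s t : R) : upper (s + t) = upper s * upper t := by
  apply Subtype.ext; simp [add_comm]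

lemma lower_add (s t : R) : lower (s + t) = lower s * lower t := by
  apply Subtype.ext; simp

lemma upper_natCast (n : ℕ) : upper (n : R) = upper 1 ^ n := by
  induction n with
  | zero => apply Subtype.ext; simp [one_fin_two]
  | succ n ih => rw [Nat.cast_succ, upper_add, ih, pow_succ]

lemma lower_natCast (n : ℕ) : lower (n : R) = lower 1 ^ n := by
  induction n with
  | zero => apply Subtype.ext; simp [one_fin_two]
  | succ n ih => rw [Nat.cast_succ, lower_add, ih, pow_succ]

lemma rot_eq_upper_mul_lower_mul_upper :
    (rot : SpecialLinearGroup (Fin 2) R) = upper (-1) * lower 1 * upper (-1) := by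
  apply Subtype.ext; simp

lemma map_upper {S : Type*} [CommRing S] (f : R →+* S) (t : R) :
    map f (upper t) = upper (f t) := by
  ext i j; fin_cases i <;> fin_cases j <;> simp

lemma map_lower {S : Type*} [CommRing S] (f : R →+* S) (t : R) :
    map f (lower t) = lower (f t) := by
  ext i j; fin_cases i <;> fin_cases j <;> simp

lemma rot_mul_upper_mul_apply_one_zero (t : R) (x : SpecialLinearGroup (Fin 2) R) :
    (rot * (upper t * x) : SpecialLinearGroup (Fin 2) R) 1 0 = x 0 0 + t * x 1 0 := by
  simp [mul_apply, Fin.sum_univ_two, vecMul, dotProduct]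

lemma eq_upper_mul_lower_mul_upper_mul_rot_mul_upper {x : SpecialLinearGroup (Fin 2) R}
    (hc : x 1 0 = 0) :
    x = upper (x 0 0) * lower (-x 1 1) * upper (x 0 0) * rot * upper (x 1 1 * x 0 1) := by
  have had : x 0 0 * x 1 1 = 1 := by
    have := x.det_coe
    rwa [det_fin_two, hc, mul_zero, sub_zero] at this
  apply Subtype.ext
  rw [eta_fin_two (x : Matrix (Fin 2) (Fin 2) R)]
  simp [hc, mul_comm (x 1 1), had]
  linear_combination -x 0 1 * had

end shears

section ZMod

variable {q : ℕ} [NeZero q]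

lemma upper_mem_closure (t : ZMod q) :
    upper t ∈ Subgroup.closure {upper (1 : ZMod q), lower 1} := by
  rw [← ZMod.natCast_zmod_val t, upper_natCast]
  exact pow_mem (Subgroup.subset_closure (by simp)) _

lemma lower_mem_closure (t : ZMod q) :
    lower t ∈ Subgroup.closure {upper (1 : ZMod q), lower 1} := by
  rw [← ZMod.natCast_zmod_val t, lower_natCast]
  exact pow_mem (Subgroup.subset_closure (by simp)) _

lemma rot_mem_closure : rot ∈ Subgroup.closure {upper (1 : ZMod q), lower 1} := by
  rw [rot_eq_upper_mul_lower_mul_upper]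
  exact mul_mem (mul_mem (upper_mem_closure _) (lower_mem_closure _)) (upper_mem_closure _)

lemma closure_upper_lower_eq_top :
    Subgroup.closure {upper (1 : ZMod q), lower 1} = ⊤ := by
  refine (Subgroup.eq_top_iff' _).mpr fun x ↦ ?_
  induction hn : (x 1 0).val using Nat.strong_induction_on generalizing x with
  | _ n ih =>
  by_cases hc : x 1 0 = 0
  · rw [eq_upper_mul_lower_mul_upper_mul_rot_mul_upper hc]
    exact mul_mem (mul_mem (mul_mem (mul_mem (upper_mem_closure _) (lower_mem_closure _))
      (upper_mem_closure _)) rot_mem_closure) (upper_mem_closure _)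
  set t : ZMod q := (((x 0 0).val / (x 1 0).val : ℕ) : ZMod q)
  have hy : rot * (upper (-t) * x) ∈ Subgroup.closure {upper (1 : ZMod q), lower 1} := by
    refine ih _ ?_ _ rfl
    rw [rot_mul_upper_mul_apply_one_zero, neg_mul, ← sub_eq_add_neg,
      ZMod.val_sub_natCast_div_mul, ← hn]
    exact Nat.mod_lt _ (ZMod.val_pos.mpr hc)
  have hx : x = (upper (-t))⁻¹ * (rot⁻¹ * (rot * (upper (-t) * x))) := by group
  rw [hx]
  exact mul_mem (inv_mem (upper_mem_closure _)) (mul_mem (inv_mem rot_mem_closure) hy)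

end ZMod

end Matrix.SpecialLinearGroup

open Matrix.SpecialLinearGroup

def mulM (i j : ℕ) : SpecialLinearGroup (Fin 2) ℤ :=
  ⟨M i * M j, by simp [M, det_fin_two_of]; ring⟩

@[simp] lemma coe_mulM (i j : ℕ) : (mulM i j : Matrix (Fin 2) (Fin 2) ℤ) = M i * M j := rfl

lemma lower_mul_mulM (t i j : ℕ) : lower (t : ℤ) * mulM i j = mulM (i + t) j := by
  apply Subtype.ext; simp [M]; constructor <;> ring

lemma mulM_mul_upper (i j t : ℕ) : mulM i j * upper (t : ℤ) = mulM i (j + t) := by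
  apply Subtype.ext; simp [M]; constructor <;> ring

theorem stmt16 (A : ℕ) (hA : 2 ≤ A) (q : ℕ) (hq : 0 < q)
    (x : Matrix.SpecialLinearGroup (Fin 2) (ZMod q)) :
    ∃ g ∈ Subgroup.closure {g : Matrix.SpecialLinearGroup (Fin 2) ℤ |
        ∃ i j : ℕ, 1 ≤ i ∧ i ≤ A ∧ 1 ≤ j ∧ j ≤ A ∧
          (g : Matrix (Fin 2) (Fin 2) ℤ) = M i * M j},
      Matrix.SpecialLinearGroup.map (Int.castRingHom (ZMod q)) g = x := by
  have : NeZero q := ⟨hq.ne'⟩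
  set G := Subgroup.closure {g : SpecialLinearGroup (Fin 2) ℤ |
    ∃ i j : ℕ, 1 ≤ i ∧ i ≤ A ∧ 1 ≤ j ∧ j ≤ A ∧ (g : Matrix (Fin 2) (Fin 2) ℤ) = M i * M j}
  have mulM_mem {i j : ℕ} (hi : 1 ≤ i) (hiA : i ≤ A) (hj : 1 ≤ j) (hjA : j ≤ A) :
      mulM i j ∈ G :=
    Subgroup.subset_closure ⟨i, j, hi, hiA, hj, hjA, rfl⟩
  have hU : upper 1 ∈ G := by
    have h := mulM_mul_upper 1 1 1
    rw [Nat.cast_one] at h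
    rw [eq_inv_mul_of_mul_eq h]
    exact mul_mem (inv_mem (mulM_mem le_rfl (by omega) le_rfl (by omega)))
      (mulM_mem le_rfl (by omega) (by omega) hA)
  have hL : lower 1 ∈ G := by
    have h := lower_mul_mulM 1 1 1
    rw [Nat.cast_one] at h
    rw [eq_mul_inv_of_mul_eq h]
    exact mul_mem (mulM_mem (by omega) hA le_rfl (by omega))
      (inv_mem (mulM_mem le_rfl (by omega) le_rfl (by omega)))
  have hmap : G.map (map (Int.castRingHom (ZMod q))) = ⊤ := by
    rw [eq_top_iff, ← closure_upper_lower_eq_top, Subgroup.closure_le, Set.insert_subset_iff,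
      Set.singleton_subset_iff]
    exact ⟨⟨_, hU, by simp [map_upper]⟩, ⟨_, hL, by simp [map_lower]⟩⟩
  obtain ⟨g, hg, rfl⟩ : x ∈ G.map (map (Int.castRingHom (ZMod q))) := hmap ▸ Subgroup.mem_top x
  exact ⟨g, hg, rfl⟩
end
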